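/- arXiv:1907.10685 — 8 statements merged into one kernel-verified Lean document; each statement's English description precedes it below -/
import Mathlib

section
/- Let H be a complex Hilbert space, let V and W be closed subspaces of H, and let ε ∈ (0,1] be such that |⟨v,w⟩| ≤ (1−ε)‖v‖‖w‖ for all v ∈ V and w ∈ W. Then the subspace V + W = {v + w : v ∈ V, w ∈ W} is closed in H. -/
local notation "⟪" x ", " y "⟫" => @inner ℂ _ _ x y

/-- Lemma 4.1 (i) ⇒ (ii): if the angle between closed subspaces `V` and `W` of a complex
Hilbert space is bounded away from zero (expressed by `|⟨v,w⟩| ≤ (1-ε)‖v‖‖w‖`), then the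
subspace `V + W` is closed. -/
theorem angle_bounded_implies_sum_closed
    {H : Type*} [NormedAddCommGroup H] [InnerProductSpace ℂ H] [CompleteSpace H]
    (V W : Submodule ℂ H) (hV : IsClosed (V : Set H)) (hW : IsClosed (W : Set H))
    (ε : ℝ) (hε : ε ∈ Set.Ioc (0 : ℝ) 1)
    (hangle : ∀ v ∈ V, ∀ w ∈ W, ‖⟪v, w⟫‖ ≤ (1 - ε) * ‖v‖ * ‖w‖) :
    IsClosed {x : H | ∃ v ∈ V, ∃ w ∈ W, x = v + w} := by
  obtain ⟨hε0, hε1⟩ := hε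
  -- key inequality
  have key : ∀ v ∈ V, ∀ w ∈ W, ε * (‖v‖ ^ 2 + ‖w‖ ^ 2) ≤ ‖v + w‖ ^ 2 := by
    intro v hv w hw
    have hsq : ‖v + w‖ ^ 2 = ‖v‖ ^ 2 + 2 * Complex.re ⟪v, w⟫ + ‖w‖ ^ 2 :=
      norm_add_sq (𝕜 := ℂ) v w
    have hre : |Complex.re ⟪v, w⟫| ≤ (1 - ε) * ‖v‖ * ‖w‖ :=
      le_trans (Complex.abs_re_le_norm _) (hangle v hv w hw)
    have h1 := abs_le.mp hre
    nlinarith [sq_nonneg (‖v‖ - ‖w‖), norm_nonneg v, norm_nonneg w]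
  apply IsSeqClosed.isClosed
  intro u x hu hux
  choose v hv w hw huvw using hu
  -- contraction estimate
  have hest : ∀ m n, ‖v m - v n‖ ≤ Real.sqrt ε⁻¹ * ‖u m - u n‖ := by
    intro m n
    have hk := key _ (V.sub_mem (hv m) (hv n)) _ (W.sub_mem (hw m) (hw n))
    have heq : (v m - v n) + (w m - w n) = u m - u n := by
      rw [huvw m, huvw n]; abel
    rw [heq] at hk
    have h2 : ‖v m - v n‖ ^ 2 ≤ ε⁻¹ * ‖u m - u n‖ ^ 2 := by
      rw [inv_mul_eq_div, le_div_iff₀ hε0]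
      nlinarith [sq_nonneg ‖w m - w n‖]
    have h3 : Real.sqrt (‖v m - v n‖ ^ 2) ≤ Real.sqrt (ε⁻¹ * ‖u m - u n‖ ^ 2) :=
      Real.sqrt_le_sqrt h2
    rwa [Real.sqrt_sq (norm_nonneg _), Real.sqrt_mul (by positivity),
      Real.sqrt_sq (norm_nonneg _)] at h3
  -- v is Cauchy
  have hucauchy : CauchySeq u := hux.cauchySeq
  have hvcauchy : CauchySeq v := by
    rw [Metric.cauchySeq_iff] at hucauchy ⊢
    intro δ hδ
    have hC : (0:ℝ) < Real.sqrt ε⁻¹ + 1 := by positivity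
    obtain ⟨N, hN⟩ := hucauchy (δ / (Real.sqrt ε⁻¹ + 1)) (by positivity)
    refine ⟨N, fun m hm n hn => ?_⟩
    have := hN m hm n hn
    rw [dist_eq_norm] at *
    calc ‖v m - v n‖ ≤ Real.sqrt ε⁻¹ * ‖u m - u n‖ := hest m n
      _ < (Real.sqrt ε⁻¹ + 1) * (δ / (Real.sqrt ε⁻¹ + 1)) := by
          apply mul_lt_mul' (by linarith) this (norm_nonneg _) hC
      _ = δ := by rw [mul_comm, div_mul_cancel₀ δ hC.ne']
  obtain ⟨l, hl⟩ := cauchySeq_tendsto_of_complete hvcauchy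
  have hlV : l ∈ V := hV.mem_of_tendsto hl (Filter.Eventually.of_forall hv)
  have hwt : Filter.Tendsto w Filter.atTop (nhds (x - l)) := by
    have : w = fun n => u n - v n := by
      funext n; rw [huvw n]; abel
    rw [this]
    exact hux.sub hl
  have hwW : x - l ∈ W := hW.mem_of_tendsto hwt (Filter.Eventually.of_forall hw)
  exact ⟨l, hlV, x - l, hwW, by abel⟩
end

section
/- Let H be a complex Hilbert space and let e be a bounded linear idempotent on H (e∘e = e, e continuous). Let V = range(e) and W = ker(e). Then for all unit vectors v ∈ V and w ∈ W one has |⟨v,w⟩| ≤ 1 − 1/(2‖e‖²). In particular the angle between V and W is strictly positive. -/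
local notation "⟪" x ", " y "⟫" => @inner ℂ _ _ x y

/-! Since `e (v - w) = v`, boundedness of `e` keeps `v - w` at distance at least `1 / ‖e‖` from
zero. Rotating `w` by a unimodular scalar (which keeps it in `ker e`) makes `⟪v, w⟫` real and
nonnegative, and then `‖v - w‖² = 2 - 2 |⟪v, w⟫|`. -/

theorem exists_norm_eq_one_norm_sub_smul_sq {𝕜 E : Type*} [RCLike 𝕜] [SeminormedAddCommGroup E]
    [InnerProductSpace 𝕜 E] (v w : E) :
    ∃ c : 𝕜, ‖c‖ = 1 ∧ ‖v - c • w‖ ^ 2 = ‖v‖ ^ 2 - 2 * ‖inner 𝕜 v w‖ + ‖w‖ ^ 2 := by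
  obtain ⟨c, hc, hcw⟩ := RCLike.exists_norm_eq_mul_self (inner 𝕜 v w)
  refine ⟨c, hc, ?_⟩
  rw [@norm_sub_sq 𝕜, inner_smul_right, ← hcw, RCLike.ofReal_re, norm_smul, hc, one_mul]

theorem ContinuousLinearMap.norm_le_opNorm_mul_norm_sub {𝕜 E : Type*} [NontriviallyNormedField 𝕜]
    [SeminormedAddCommGroup E] [NormedSpace 𝕜 E] {e : E →L[𝕜] E} {v w : E} (hv : e v = v)
    (hw : e w = 0) : ‖v‖ ≤ ‖e‖ * ‖v - w‖ := by
  calc ‖v‖ = ‖e (v - w)‖ := by rw [map_sub, hv, hw, sub_zero]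
    _ ≤ ‖e‖ * ‖v - w‖ := e.le_opNorm _

theorem ContinuousLinearMap.norm_inner_le_of_apply_eq_self_of_apply_eq_zero {𝕜 E : Type*}
    [RCLike 𝕜] [SeminormedAddCommGroup E] [InnerProductSpace 𝕜 E] {e : E →L[𝕜] E} {v w : E}
    (hv : e v = v) (hw : e w = 0) (hv1 : ‖v‖ = 1) (hw1 : ‖w‖ = 1) :
    ‖inner 𝕜 v w‖ ≤ 1 - 1 / (2 * ‖e‖ ^ 2) := by
  obtain ⟨c, -, hdist⟩ := exists_norm_eq_one_norm_sub_smul_sq (𝕜 := 𝕜) v w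
  have hcw : e (c • w) = 0 := by rw [map_smul, hw, smul_zero]
  have hbound := e.norm_le_opNorm_mul_norm_sub hv hcw
  rw [hv1] at hbound
  have he : 0 < ‖e‖ := by
    by_contra! h
    nlinarith [norm_nonneg e, norm_nonneg (v - c • w)]
  have hsq : 1 ≤ ‖e‖ ^ 2 * (2 - 2 * ‖inner 𝕜 v w‖) := by
    rw [hv1, hw1] at hdist
    nlinarith [norm_nonneg (v - c • w)]
  rw [le_sub_comm, div_le_iff₀ (by positivity)]
  linarith

theorem idempotent_angle_bound_general
    {H : Type*} [NormedAddCommGroup H] [InnerProductSpace ℂ H]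
    (e : H →L[ℂ] H) (he : e.comp e = e) :
    ∀ v ∈ LinearMap.range (e : H →ₗ[ℂ] H), ∀ w ∈ LinearMap.ker (e : H →ₗ[ℂ] H), ‖v‖ = 1 → ‖w‖ = 1 →
      ‖⟪v, w⟫‖ ≤ 1 - 1 / (2 * ‖e‖ ^ 2) := by
  intro v hv w hw hv1 hw1
  have hidem : IsIdempotentElem (e : H →ₗ[ℂ] H) := congrArg ContinuousLinearMap.toLinearMap he
  exact e.norm_inner_le_of_apply_eq_self_of_apply_eq_zero
    ((LinearMap.IsIdempotentElem.mem_range_iff hidem).mp hv) hw hv1 hw1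

/-- Quantitative form of Lemma 4.1 (iii) ⇒ (i): if `e` is a bounded idempotent on a
complex Hilbert space, `V = range e`, `W = ker e`, then for all unit vectors `v ∈ V`,
`w ∈ W` one has `|⟨v,w⟩| ≤ 1 − 1/(2‖e‖²)`; in particular the angle between `V` and `W`
is strictly positive. -/
theorem idempotent_angle_bound
    {H : Type*} [NormedAddCommGroup H] [InnerProductSpace ℂ H] [CompleteSpace H]
    (e : H →L[ℂ] H) (he : e.comp e = e) :
    ∀ v ∈ LinearMap.range (e : H →ₗ[ℂ] H), ∀ w ∈ LinearMap.ker (e : H →ₗ[ℂ] H), ‖v‖ = 1 → ‖w‖ = 1 →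
      ‖⟪v, w⟫‖ ≤ 1 - 1 / (2 * ‖e‖ ^ 2) :=
  idempotent_angle_bound_general e he
end

section
/- Let H be a complex Hilbert space, let V and W be closed subspaces of H, and let ε ∈ (0,1] be such that |⟨v,w⟩| ≤ (1−ε)‖v‖‖w‖ for all v ∈ V and w ∈ W. Then for all v ∈ V and w ∈ W one has ε(2−ε)‖v‖² ≤ ‖v + w‖². Consequently, if V + W = H, the bounded idempotent e with range V and kernel W satisfies ‖e‖ ≤ 1/√(ε(2−ε)). -/
local notation "⟪" x ", " y "⟫" => @inner ℂ _ _ x y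

/-! Expanding `‖v + w‖²` and bounding the cross term by the angle hypothesis with `c = 1 - ε`
gives `‖v + w‖² ≥ (‖w‖ - c‖v‖)² + (1 - c²)‖v‖² ≥ (1 - c²)‖v‖²`, and `1 - c² = ε(2 - ε)`.
Splitting `x = e x + (x - e x)` along the range and kernel of the idempotent `e` turns this
into `√(ε(2 - ε)) ‖e x‖ ≤ ‖x‖`. -/

section AngleBound

variable {𝕜 E : Type*} [RCLike 𝕜] [SeminormedAddCommGroup E] [InnerProductSpace 𝕜 E]

theorem one_sub_sq_mul_norm_sq_le_norm_add_sq {v w : E} {c : ℝ}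
    (h : ‖(inner 𝕜 v w : 𝕜)‖ ≤ c * ‖v‖ * ‖w‖) :
    (1 - c ^ 2) * ‖v‖ ^ 2 ≤ ‖v + w‖ ^ 2 := by
  have hre : -(c * ‖v‖ * ‖w‖) ≤ RCLike.re (inner 𝕜 v w : 𝕜) :=
    (neg_le_neg h).trans (neg_le_of_abs_le (RCLike.abs_re_le_norm _))
  calc (1 - c ^ 2) * ‖v‖ ^ 2
      ≤ (1 - c ^ 2) * ‖v‖ ^ 2 + (‖w‖ - c * ‖v‖) ^ 2 := le_add_of_nonneg_right (sq_nonneg _)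
    _ = ‖v‖ ^ 2 + 2 * -(c * ‖v‖ * ‖w‖) + ‖w‖ ^ 2 := by ring
    _ ≤ ‖v‖ ^ 2 + 2 * RCLike.re (inner 𝕜 v w : 𝕜) + ‖w‖ ^ 2 := by gcongr
    _ = ‖v + w‖ ^ 2 := (norm_add_sq v w).symm

end AngleBound

section Idempotent

variable {𝕜 E F : Type*} [NontriviallyNormedField 𝕜]
  [SeminormedAddCommGroup E] [NormedSpace 𝕜 E] [SeminormedAddCommGroup F] [NormedSpace 𝕜 F]

theorem ContinuousLinearMap.opNorm_le_one_div_sqrt {f : E →L[𝕜] F} {b : ℝ} (hb : 0 < b)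
    (h : ∀ x, b * ‖f x‖ ^ 2 ≤ ‖x‖ ^ 2) : ‖f‖ ≤ 1 / √b := by
  refine f.opNorm_le_bound (by positivity) fun x ↦ ?_
  have hsqrt : √b * ‖f x‖ ≤ ‖x‖ := by
    simpa [Real.sqrt_mul hb.le, Real.sqrt_sq (norm_nonneg _)] using Real.sqrt_le_sqrt (h x)
  rw [one_div_mul_eq_div, le_div_iff₀' (Real.sqrt_pos.mpr hb)]
  exact hsqrt

theorem IsIdempotentElem.sub_apply_self_mem_ker {e : E →L[𝕜] E} (he : IsIdempotentElem e)
    (x : E) : x - e x ∈ LinearMap.ker (e : E →ₗ[𝕜] E) :=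
  LinearMap.sub_mem_ker_iff.mpr (congr($he x)).symm

end Idempotent

theorem idempotent_norm_bound_of_angle_general
    {H : Type*} [NormedAddCommGroup H] [InnerProductSpace ℂ H]
    (V W : Submodule ℂ H)
    (ε : ℝ) (hε : ε ∈ Set.Ioc (0 : ℝ) 1)
    (hangle : ∀ v ∈ V, ∀ w ∈ W, ‖⟪v, w⟫‖ ≤ (1 - ε) * ‖v‖ * ‖w‖) :
    (∀ v ∈ V, ∀ w ∈ W, ε * (2 - ε) * ‖v‖ ^ 2 ≤ ‖v + w‖ ^ 2) ∧
    ((∀ x : H, ∃ v ∈ V, ∃ w ∈ W, x = v + w) →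
      ∀ e : H →L[ℂ] H, e.comp e = e → LinearMap.range (e : H →ₗ[ℂ] H) = V → LinearMap.ker (e : H →ₗ[ℂ] H) = W →
        ‖e‖ ≤ 1 / Real.sqrt (ε * (2 - ε))) := by
  have hsplit : ∀ v ∈ V, ∀ w ∈ W, ε * (2 - ε) * ‖v‖ ^ 2 ≤ ‖v + w‖ ^ 2 := fun v hv w hw ↦ by
    simpa [show 1 - (1 - ε) ^ 2 = ε * (2 - ε) by ring] using
      one_sub_sq_mul_norm_sq_le_norm_add_sq (hangle v hv w hw)
  refine ⟨hsplit, fun _ e he hrange hker ↦ ?_⟩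
  have hpos : 0 < ε * (2 - ε) := mul_pos hε.1 (by linarith [hε.2])
  refine e.opNorm_le_one_div_sqrt hpos fun x ↦ ?_
  have hx := hsplit (e x) (hrange ▸ LinearMap.mem_range_self _ x) (x - e x)
    (hker ▸ IsIdempotentElem.sub_apply_self_mem_ker he x)
  rwa [add_sub_cancel] at hx

/-- The quantitative 'moreover' clause of Lemma 4.1: if `|⟨v,w⟩| ≤ (1-ε)‖v‖‖w‖` for all
`v ∈ V`, `w ∈ W`, then `ε(2−ε)‖v‖² ≤ ‖v + w‖²`; consequently, if `V + W = H`, the bounded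
idempotent `e` with range `V` and kernel `W` satisfies `‖e‖ ≤ 1/√(ε(2−ε))`. -/
theorem idempotent_norm_bound_of_angle
    {H : Type*} [NormedAddCommGroup H] [InnerProductSpace ℂ H] [CompleteSpace H]
    (V W : Submodule ℂ H) (hV : IsClosed (V : Set H)) (hW : IsClosed (W : Set H))
    (ε : ℝ) (hε : ε ∈ Set.Ioc (0 : ℝ) 1)
    (hangle : ∀ v ∈ V, ∀ w ∈ W, ‖⟪v, w⟫‖ ≤ (1 - ε) * ‖v‖ * ‖w‖) :
    (∀ v ∈ V, ∀ w ∈ W, ε * (2 - ε) * ‖v‖ ^ 2 ≤ ‖v + w‖ ^ 2) ∧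
    ((∀ x : H, ∃ v ∈ V, ∃ w ∈ W, x = v + w) →
      ∀ e : H →L[ℂ] H, e.comp e = e → LinearMap.range (e : H →ₗ[ℂ] H) = V → LinearMap.ker (e : H →ₗ[ℂ] H) = W →
        ‖e‖ ≤ 1 / Real.sqrt (ε * (2 - ε))) :=
  idempotent_norm_bound_of_angle_general V W ε hε hangle
end

section
/- Let H be a complex Hilbert space and let E be a map assigning to each Borel set σ ⊆ ℂ a bounded linear operator E(σ) on H such that: (i) E(ℂ) = 1; (ii) E(σ₁ ∩ σ₂) = E(σ₁)E(σ₂) for all Borel σ₁, σ₂ (in particular each E(σ) is idempotent); (iii) for every sequence of pairwise disjoint Borel sets σ₁, σ₂, …, and every x ∈ H, the series Σᵢ E(σᵢ)x converges in H to E(⋃ᵢ σᵢ)x; and (iv) sup{‖E(σ)‖ : σ Borel} < ∞. Then there exists a positive, invertible bounded operator A on H such that for every Borel set σ the operator A E(σ) A⁻¹ is self-adjoint, and such that A commutes with every unitary operator U on H that commutes with E(σ) for every Borel σ. -/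
/-!
For a finite family of Borel sets, the atoms `a` of the Boolean algebra it generates give a finite
partition of unity by idempotents `E a`, and `T = ∑ E(a)* E(a)` satisfies `T E(σ) = E(σ)* T` for
every member `σ` of the family. Each signed sum `∑ ±E(a)` is a reflection `2 E(τ) - 1` with norm at
most `2M + 1`, so averaging `‖∑ ±E(a) x‖²` over all sign patterns gives
`(2M + 1)⁻² ≤ T ≤ (2M + 1)²`. A limit of these operators along an ultrafilter on the directed set of
finite families (a Banach limit) is a strictly positive `T` intertwining every `E(σ)` with `E(σ)*`
and commuting with every unitary that commutes with all `E(σ)`. Then `A = √T` works, because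
`A E(σ) A⁻¹ = A⁻¹ (T E(σ)) A⁻¹ = A⁻¹ E(σ)* A`.
-/

open scoped ComplexOrder

local notation "⟪" x ", " y "⟫" => @inner ℂ _ _ x y

open Finset Filter Topology MeasureTheory

theorem sum_powerset_norm_sum_ite_sq {𝕜 F ι : Type*} [RCLike 𝕜] [NormedAddCommGroup F]
    [InnerProductSpace 𝕜 F] [DecidableEq ι] (s : Finset ι) (v : ι → F) :
    ∑ t ∈ s.powerset, ‖∑ i ∈ s, if i ∈ t then v i else -v i‖ ^ 2
      = 2 ^ #s * ∑ i ∈ s, ‖v i‖ ^ 2 := by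
  induction s using Finset.induction_on with
  | empty => simp
  | insert a s ha ih =>
    have hpar (w : F) : ‖-v a + w‖ ^ 2 + ‖v a + w‖ ^ 2 = 2 * ‖w‖ ^ 2 + 2 * ‖v a‖ ^ 2 := by
      have := parallelogram_law_with_norm 𝕜 w (v a)
      rw [add_comm (v a), ← sub_eq_neg_add]
      nlinarith [this]
    have hsplit (t : Finset ι) (ht : t ⊆ s) :
        ‖∑ i ∈ insert a s, if i ∈ t then v i else -v i‖ ^ 2
          + ‖∑ i ∈ insert a s, if i ∈ insert a t then v i else -v i‖ ^ 2
          = 2 * ‖∑ i ∈ s, if i ∈ t then v i else -v i‖ ^ 2 + 2 * ‖v a‖ ^ 2 := by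
      have hat : a ∉ t := fun h => ha (ht h)
      have hs : ∀ i ∈ s, (if i ∈ insert a t then v i else -v i) = if i ∈ t then v i else -v i :=
        fun i hi => by simp [ne_of_mem_of_not_mem hi ha]
      rw [sum_insert ha, sum_insert ha, sum_congr rfl hs, if_neg hat, if_pos (mem_insert_self a t),
        hpar]
    rw [sum_powerset_insert ha, card_insert_of_notMem ha, sum_insert ha, ← sum_add_distrib,
      sum_congr rfl fun t ht => hsplit t (mem_powerset.1 ht), sum_add_distrib, ← mul_sum, ih,
      sum_const, card_powerset, nsmul_eq_mul]
    push_cast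
    ring

theorem IsIdempotentElem.two_mul_sub_one_mul_self {R : Type*} [Ring R] {q : R}
    (hq : IsIdempotentElem q) : (2 * q - 1) * (2 * q - 1) = 1 := by
  calc (2 * q - 1) * (2 * q - 1) = 4 * (q * q) - 4 * q + 1 := by noncomm_ring
    _ = 1 := by rw [hq.eq]; abel

section Reflection

variable {𝕜 F : Type*} [RCLike 𝕜] [NormedAddCommGroup F] [NormedSpace 𝕜 F]
  {Q : F →L[𝕜] F} {M : ℝ}

theorem norm_two_mul_sub_one_apply_le (hQ : ‖Q‖ ≤ M) (y : F) :
    ‖(2 * Q - 1) y‖ ≤ (2 * M + 1) * ‖y‖ :=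
  calc ‖(2 * Q - 1) y‖ = ‖Q y + Q y - y‖ := by simp [two_mul]
    _ ≤ ‖Q y‖ + ‖Q y‖ + ‖y‖ := (norm_sub_le _ _).trans (by gcongr; exact norm_add_le _ _)
    _ ≤ M * ‖y‖ + M * ‖y‖ + ‖y‖ := by gcongr <;> exact Q.le_of_opNorm_le hQ y
    _ = (2 * M + 1) * ‖y‖ := by ring

theorem norm_le_mul_norm_two_mul_sub_one_apply (hQ : IsIdempotentElem Q) (hM : ‖Q‖ ≤ M) (y : F) :
    ‖y‖ ≤ (2 * M + 1) * ‖(2 * Q - 1) y‖ := by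
  have h := norm_two_mul_sub_one_apply_le hM ((2 * Q - 1) y)
  rwa [← mul_apply_eq_comp, hQ.two_mul_sub_one_mul_self, one_apply_eq_self] at h

end Reflection

section PartitionOfUnity

variable {𝕜 F ι : Type*} [RCLike 𝕜] [NormedAddCommGroup F] [InnerProductSpace 𝕜 F]
  [DecidableEq ι] {P : ι → F →L[𝕜] F} {s : Finset ι}

theorem sum_ite_neg_eq_two_mul_sub_one (hsum : ∑ i ∈ s, P i = 1) {t : Finset ι} (ht : t ⊆ s) :
    (∑ i ∈ s, if i ∈ t then P i else -P i) = 2 * ∑ i ∈ t, P i - 1 := by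
  rw [sum_ite, filter_mem_eq_inter, inter_eq_right.2 ht, filter_notMem_eq_sdiff, sum_neg_distrib,
    ← hsum, ← sum_sdiff ht]
  noncomm_ring

theorem sum_norm_sq_apply_bounds {M : ℝ} (hsum : ∑ i ∈ s, P i = 1)
    (hidem : ∀ t ⊆ s, IsIdempotentElem (∑ i ∈ t, P i)) (hnorm : ∀ t ⊆ s, ‖∑ i ∈ t, P i‖ ≤ M)
    (x : F) :
    ‖x‖ ^ 2 ≤ (2 * M + 1) ^ 2 * ∑ i ∈ s, ‖P i x‖ ^ 2 ∧
      ∑ i ∈ s, ‖P i x‖ ^ 2 ≤ (2 * M + 1) ^ 2 * ‖x‖ ^ 2 := by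
  set R : Finset ι → F := fun t => (2 * ∑ i ∈ t, P i - 1) x
  have hR : ∑ t ∈ s.powerset, ‖R t‖ ^ 2 = 2 ^ #s * ∑ i ∈ s, ‖P i x‖ ^ 2 := by
    rw [← sum_powerset_norm_sum_ite_sq (𝕜 := 𝕜)]
    refine sum_congr rfl fun t ht => ?_
    simp only [R, ← sum_ite_neg_eq_two_mul_sub_one hsum (mem_powerset.1 ht), _root_.sum_apply,
      apply_ite (fun T : F →L[𝕜] F => T x), neg_apply]
  have hpow : (0 : ℝ) < 2 ^ #s := by positivity
  constructor
  · refine le_of_mul_le_mul_left ?_ hpow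
    calc 2 ^ #s * ‖x‖ ^ 2 = ∑ t ∈ s.powerset, ‖x‖ ^ 2 := by simp
      _ ≤ ∑ t ∈ s.powerset, (2 * M + 1) ^ 2 * ‖R t‖ ^ 2 := by
        refine sum_le_sum fun t ht => ?_
        rw [← mul_pow]
        gcongr
        exact norm_le_mul_norm_two_mul_sub_one_apply (hidem t (mem_powerset.1 ht))
          (hnorm t (mem_powerset.1 ht)) x
      _ = 2 ^ #s * ((2 * M + 1) ^ 2 * ∑ i ∈ s, ‖P i x‖ ^ 2) := by
        rw [← mul_sum, hR]; ring
  · refine le_of_mul_le_mul_left ?_ hpow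
    calc 2 ^ #s * ∑ i ∈ s, ‖P i x‖ ^ 2 = ∑ t ∈ s.powerset, ‖R t‖ ^ 2 := hR.symm
      _ ≤ ∑ t ∈ s.powerset, ((2 * M + 1) * ‖x‖) ^ 2 := by
        refine sum_le_sum fun t ht => ?_
        gcongr
        exact norm_two_mul_sub_one_apply_le (hnorm t (mem_powerset.1 ht)) x
      _ = 2 ^ #s * ((2 * M + 1) ^ 2 * ‖x‖ ^ 2) := by simp [mul_pow]

end PartitionOfUnity

section Additivity

variable {α G : Type*} [MeasurableSpace α]

theorem isSetRing_measurableSet : IsSetRing {s : Set α | MeasurableSet s} :=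
  ⟨.empty, fun _ _ hs ht => hs.union ht, fun _ _ hs ht => hs.diff ht⟩

theorem map_biUnion_finset_eq_sum [AddCommMonoid G] {m : Set α → G} (hm₀ : m ∅ = 0)
    (hm : ∀ σ τ, MeasurableSet σ → MeasurableSet τ → Disjoint σ τ → m (σ ∪ τ) = m σ + m τ)
    {ι : Type*} {S : Finset ι} {p : ι → Set α} (hp : ∀ i ∈ S, MeasurableSet (p i))
    (hd : (S : Set ι).PairwiseDisjoint p) :
    m (⋃ i ∈ S, p i) = ∑ i ∈ S, m (p i) :=
  addContent_biUnion_eq (m := isSetRing_measurableSet.addContent_of_union m hm₀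
    fun hσ hτ => hm _ _ hσ hτ) isSetRing_measurableSet hp hd

variable [AddCommGroup G] [TopologicalSpace G] [ContinuousAdd G] [T2Space G]

def IsCountablyAdditive (m : Set α → G) : Prop :=
  ∀ σ : ℕ → Set α, (∀ i, MeasurableSet (σ i)) → Pairwise (Function.onFun Disjoint σ) →
    Tendsto (fun n => ∑ i ∈ range n, m (σ i)) atTop (𝓝 (m (⋃ i, σ i)))

namespace IsCountablyAdditive

variable {m : Set α → G}

theorem empty (hm : IsCountablyAdditive m) : m ∅ = 0 := by
  have h := hm (fun _ => ∅) (fun _ => .empty) fun _ _ _ => disjoint_bot_left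
  simp only [Set.iUnion_empty, sum_const, card_range] at h
  have h' := (tendsto_add_atTop_iff_nat 1).2 h
  simp only [succ_nsmul] at h'
  simpa using tendsto_nhds_unique (h.add_const (m ∅)) h'

theorem union (hm : IsCountablyAdditive m) {σ τ : Set α} (hσ : MeasurableSet σ)
    (hτ : MeasurableSet τ) (hd : Disjoint σ τ) : m (σ ∪ τ) = m σ + m τ := by
  set p : ℕ → Set α := fun n => if n = 0 then σ else if n = 1 then τ else ∅
  have hU : ⋃ n, p n = σ ∪ τ := by simp [p, ← Set.union_iUnion_nat_succ]
  have h := hm p (fun i => by simp only [p]; split_ifs <;> simp [hσ, hτ]) fun i j hij => by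
    rcases i with _ | _ | i <;> rcases j with _ | _ | j <;> simp_all [p, Function.onFun, hd.symm]
  rw [hU, ← tendsto_add_atTop_iff_nat 2] at h
  simpa [sum_range_succ', p, hm.empty, add_comm, eq_comm] using h

end IsCountablyAdditive

end Additivity

section Atoms

variable {α J : Type*}

def atom (σ : J → Set α) (t : Finset J) : Set α := {x | ∀ j, x ∈ σ j ↔ j ∈ t}

theorem measurableSet_atom [MeasurableSpace α] [Countable J] {σ : J → Set α}
    (hσ : ∀ j, MeasurableSet (σ j)) (t : Finset J) : MeasurableSet (atom σ t) := by
  rw [atom, Set.ofPred_forall]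
  refine .iInter fun j => ?_
  by_cases h : j ∈ t <;> simp only [h, iff_true, iff_false]
  exacts [hσ j, (hσ j).compl]

theorem pairwise_disjoint_atom (σ : J → Set α) : Pairwise (Function.onFun Disjoint (atom σ)) :=
  fun _ _ htu => Set.disjoint_left.2 fun _ hxt hxu =>
    htu (Finset.ext fun j => (hxt j).symm.trans (hxu j))

theorem iUnion_atom [Fintype J] (σ : J → Set α) : ⋃ t, atom σ t = Set.univ := by
  classical
  exact Set.eq_univ_of_forall fun x => Set.mem_iUnion.2 ⟨univ.filter (x ∈ σ ·), fun j => by simp⟩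

theorem atom_inter [DecidableEq J] (σ : J → Set α) (t : Finset J) (j : J) :
    atom σ t ∩ σ j = if j ∈ t then atom σ t else ∅ := by
  split_ifs with h
  · exact Set.inter_eq_left.2 fun x hx => (hx j).2 h
  · exact Set.eq_empty_of_forall_notMem fun x hx => h ((hx.1 j).1 hx.2)

end Atoms

section LoewnerOrder

variable {H : Type*} [NormedAddCommGroup H] [InnerProductSpace ℂ H]

theorem ContinuousLinearMap.le_iff_inner_le_inner {S T : H →L[ℂ] H} :
    S ≤ T ↔ ∀ x, ⟪S x, x⟫ ≤ ⟪T x, x⟫ := by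
  simp only [le_def, isPositive_iff_complex, Complex.le_def, Complex.ext_iff]
  simp [inner_sub_left, eq_sub_iff_add_eq, and_comm]

theorem ContinuousLinearMap.algebraMap_le_iff {r : ℝ} {T : H →L[ℂ] H} :
    algebraMap ℝ (H →L[ℂ] H) r ≤ T ↔ ∀ x, ((r * ‖x‖ ^ 2 : ℝ) : ℂ) ≤ ⟪T x, x⟫ := by
  simp [le_iff_inner_le_inner, Algebra.algebraMap_eq_smul_one, inner_self_eq_norm_sq_to_K]

theorem ContinuousLinearMap.le_algebraMap_iff {r : ℝ} {T : H →L[ℂ] H} :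
    T ≤ algebraMap ℝ (H →L[ℂ] H) r ↔ ∀ x, ⟪T x, x⟫ ≤ ((r * ‖x‖ ^ 2 : ℝ) : ℂ) := by
  simp [le_iff_inner_le_inner, Algebra.algebraMap_eq_smul_one, inner_self_eq_norm_sq_to_K]

variable {ι : Type*} {l : Filter ι} [l.NeBot] {S : ι → H →L[ℂ] H} {T : H →L[ℂ] H}

theorem le_of_tendsto_inner_apply {a : H →L[ℂ] H}
    (hS : ∀ x y, Tendsto (fun i => ⟪S i x, y⟫) l (𝓝 ⟪T x, y⟫)) (h : ∀ᶠ i in l, a ≤ S i) :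
    a ≤ T :=
  ContinuousLinearMap.le_iff_inner_le_inner.2 fun x =>
    ge_of_tendsto (hS x x) (h.mono fun _ hi => ContinuousLinearMap.le_iff_inner_le_inner.1 hi x)

end LoewnerOrder

section AtomGram

variable {H : Type*} [NormedAddCommGroup H] [InnerProductSpace ℂ H] [CompleteSpace H]
  {J : Type*} [Fintype J] {E : Set ℂ → H →L[ℂ] H} {σ : J → Set ℂ}

noncomputable def atomGram (E : Set ℂ → H →L[ℂ] H) (σ : J → Set ℂ) : H →L[ℂ] H :=
  ∑ t : Finset J, star (E (atom σ t)) * E (atom σ t)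

theorem inner_atomGram_apply_self (x : H) :
    ⟪atomGram E σ x, x⟫ = ((∑ t : Finset J, ‖E (atom σ t) x‖ ^ 2 : ℝ) : ℂ) := by
  simp [atomGram, ContinuousLinearMap.star_eq_adjoint,
    ContinuousLinearMap.adjoint_inner_left, inner_self_eq_norm_sq_to_K]

theorem atomGram_bounds [DecidableEq J] {M : ℝ} (hE1 : E Set.univ = 1)
    (hmul : ∀ σ τ, MeasurableSet σ → MeasurableSet τ → E (σ ∩ τ) = E σ * E τ) (hE0 : E ∅ = 0)
    (hunion : ∀ σ τ, MeasurableSet σ → MeasurableSet τ → Disjoint σ τ → E (σ ∪ τ) = E σ + E τ)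
    (hM : ∀ σ, MeasurableSet σ → ‖E σ‖ ≤ M) (hσ : ∀ j, MeasurableSet (σ j)) :
    algebraMap ℝ _ ((2 * M + 1) ^ 2)⁻¹ ≤ atomGram E σ ∧
      atomGram E σ ≤ algebraMap ℝ _ ((2 * M + 1) ^ 2) := by
  have hM0 : 0 ≤ M := (norm_nonneg _).trans (hM ∅ .empty)
  have hmeas (u : Finset (Finset J)) : MeasurableSet (⋃ t ∈ u, atom σ t) :=
    u.measurableSet_biUnion fun t _ => measurableSet_atom hσ t
  have hsub (u : Finset (Finset J)) : ∑ t ∈ u, E (atom σ t) = E (⋃ t ∈ u, atom σ t) :=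
    (map_biUnion_finset_eq_sum hE0 hunion (fun t _ => measurableSet_atom hσ t)
      ((pairwise_disjoint_atom σ).set_pairwise _)).symm
  have hb (x : H) := sum_norm_sq_apply_bounds (P := fun t => E (atom σ t)) (s := univ)
    (by rw [hsub, ← hE1]; simp [iUnion_atom])
    (fun u _ => by
      rw [hsub, IsIdempotentElem, ← hmul _ _ (hmeas u) (hmeas u), Set.inter_self])
    (fun u _ => by rw [hsub]; exact hM _ (hmeas u)) x
  have hK : (0 : ℝ) < (2 * M + 1) ^ 2 := by positivity
  simp only [ContinuousLinearMap.algebraMap_le_iff, ContinuousLinearMap.le_algebraMap_iff,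
    inner_atomGram_apply_self, Complex.real_le_real]
  exact ⟨fun x => by rw [inv_mul_le_iff₀ hK]; exact (hb x).1, fun x => by linarith [(hb x).2]⟩

theorem atomGram_mul_eq [DecidableEq J]
    (hmul : ∀ σ τ, MeasurableSet σ → MeasurableSet τ → E (σ ∩ τ) = E σ * E τ)
    (hE0 : E ∅ = 0) (hσ : ∀ j, MeasurableSet (σ j)) (j : J) :
    atomGram E σ * E (σ j) = star (E (σ j)) * atomGram E σ := by
  simp only [atomGram, sum_mul, mul_sum]
  refine sum_congr rfl fun t _ => ?_
  have h : E (atom σ t) * E (σ j) = if j ∈ t then E (atom σ t) else 0 := by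
    rw [← hmul _ _ (measurableSet_atom hσ t) (hσ j), atom_inter]
    split_ifs <;> simp [hE0]
  calc star (E (atom σ t)) * E (atom σ t) * E (σ j)
      = star (E (atom σ t)) * (E (atom σ t) * E (σ j)) := mul_assoc _ _ _
    _ = star (E (atom σ t) * E (σ j)) * E (atom σ t) := by rw [h]; split_ifs <;> simp
    _ = star (E (σ j)) * (star (E (atom σ t)) * E (atom σ t)) := by rw [star_mul, mul_assoc]

theorem commute_atomGram {U : H →L[ℂ] H} (hU : ∀ τ, MeasurableSet τ → Commute U (E τ))
    (hU' : ∀ τ, MeasurableSet τ → Commute U (star (E τ))) (hσ : ∀ j, MeasurableSet (σ j)) :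
    Commute U (atomGram E σ) :=
  Commute.sum_right _ _ _ fun t _ =>
    (hU' _ (measurableSet_atom hσ t)).mul_right (hU _ (measurableSet_atom hσ t))

end AtomGram

theorem Units.isSelfAdjoint_mul_mul_inv {R : Type*} [Monoid R] [StarMul R] (u : Rˣ)
    (hu : IsSelfAdjoint (u : R)) {e : R} (h : u * u * e = star e * (u * u)) :
    IsSelfAdjoint (u * e * ↑u⁻¹) := by
  have hinv : star (↑u⁻¹ : R) = ↑u⁻¹ :=
    Units.eq_inv_of_mul_eq_one_left (by rw [← hu.star_eq, ← star_mul, Units.inv_mul, star_one])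
  calc star (↑u * e * ↑u⁻¹) = ↑u⁻¹ * star e * ↑u := by
        simp only [star_mul, hinv, hu.star_eq, mul_assoc]
    _ = ↑u⁻¹ * (star e * (↑u * ↑u)) * ↑u⁻¹ := by simp [mul_assoc]
    _ = ↑u⁻¹ * (↑u * ↑u * e) * ↑u⁻¹ := by rw [h]
    _ = ↑u * e * ↑u⁻¹ := by simp [mul_assoc]

theorem Commute.star_left_of_mem_unitary {R : Type*} [Monoid R] [StarMul R] {u a : R}
    (hu : u ∈ unitary R) (h : Commute u a) : Commute (star u) a := by
  calc star u * a = star u * (u * a) * star u := by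
        rw [h.eq, mul_assoc, mul_assoc, Unitary.mul_star_self_of_mem hu, mul_one]
    _ = a * star u := by rw [← mul_assoc, Unitary.star_mul_self_of_mem hu, one_mul]

section WeakLimit

variable {𝕜 H ι : Type*} [RCLike 𝕜] [NormedAddCommGroup H] [InnerProductSpace 𝕜 H]
  [CompleteSpace H]

-- Weak-operator compactness of bounded sets of operators, in ultrafilter form.
theorem exists_tendsto_inner_apply_of_norm_le (l : Ultrafilter ι) (S : ι → H →L[𝕜] H) {C : ℝ}
    (hS : ∀ i, ‖S i‖ ≤ C) :
    ∃ T : H →L[𝕜] H, ∀ x y, Tendsto (fun i => inner 𝕜 (S i x) y) l (𝓝 (inner 𝕜 (T x) y)) := by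
  have hbound (i : ι) (x y : H) : ‖inner 𝕜 (S i x) y‖ ≤ C * ‖x‖ * ‖y‖ :=
    (norm_inner_le_norm _ _).trans (by gcongr; exact (S i).le_of_opNorm_le (hS i) x)
  have hlim (x y : H) : ∃ z, Tendsto (fun i => inner 𝕜 (S i x) y) l (𝓝 z) := by
    obtain ⟨z, -, hz⟩ := (isCompact_closedBall (0 : 𝕜) (C * ‖x‖ * ‖y‖)).ultrafilter_le_nhds'
      (l.map fun i => inner 𝕜 (S i x) y)
      (Ultrafilter.mem_map.2 (univ_mem' fun i => mem_closedBall_zero_iff.2 (hbound i x y)))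
    exact ⟨z, hz⟩
  choose φ hφ using hlim
  let B : H →L⋆[𝕜] H →L[𝕜] 𝕜 := LinearMap.mkContinuous₂
    (LinearMap.mk₂'ₛₗ (starRingEnd 𝕜) (RingHom.id 𝕜) φ
      (fun x x' y => tendsto_nhds_unique (hφ _ _) <| by
        simpa only [map_add, inner_add_left] using (hφ x y).add (hφ x' y))
      (fun c x y => tendsto_nhds_unique (hφ _ _) <| by
        simpa only [map_smul, inner_smul_left, smul_eq_mul] using (hφ x y).const_mul _)
      (fun x y y' => tendsto_nhds_unique (hφ _ _) <| by
        simpa only [inner_add_right] using (hφ x y).add (hφ x y'))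
      (fun c x y => tendsto_nhds_unique (hφ _ _) <| by
        simpa only [inner_smul_right, smul_eq_mul, RingHom.id_apply] using (hφ x y).const_mul c))
    C fun x y => le_of_tendsto (hφ x y).norm (Eventually.of_forall fun i => hbound i x y)
  exact ⟨InnerProductSpace.continuousLinearMapOfBilin B, fun x y => by
    rw [InnerProductSpace.continuousLinearMapOfBilin_apply]
    exact hφ x y⟩

variable {l : Filter ι} [l.NeBot] {S : ι → H →L[𝕜] H} {T : H →L[𝕜] H}

theorem mul_eq_mul_of_tendsto_inner_apply {a b : H →L[𝕜] H}
    (hS : ∀ x y, Tendsto (fun i => inner 𝕜 (S i x) y) l (𝓝 (inner 𝕜 (T x) y)))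
    (h : ∀ᶠ i in l, S i * a = b * S i) : T * a = b * T := by
  ext x
  refine ext_inner_right 𝕜 fun y => ?_
  rw [mul_apply_eq_comp, mul_apply_eq_comp, ← ContinuousLinearMap.adjoint_inner_right b]
  refine tendsto_nhds_unique_of_eventuallyEq (hS (a x) y) (hS x (b.adjoint y)) ?_
  filter_upwards [h] with i hi
  rw [← mul_apply_eq_comp, hi, mul_apply_eq_comp, ContinuousLinearMap.adjoint_inner_right]

end WeakLimit

theorem exists_isStrictlyPositive_intertwining {H : Type*} [NormedAddCommGroup H]
    [InnerProductSpace ℂ H] [CompleteSpace H] {E : Set ℂ → H →L[ℂ] H} {M : ℝ}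
    (hE1 : E Set.univ = 1)
    (hmul : ∀ σ τ, MeasurableSet σ → MeasurableSet τ → E (σ ∩ τ) = E σ * E τ) (hE0 : E ∅ = 0)
    (hunion : ∀ σ τ, MeasurableSet σ → MeasurableSet τ → Disjoint σ τ → E (σ ∪ τ) = E σ + E τ)
    (hM : ∀ σ, MeasurableSet σ → ‖E σ‖ ≤ M) :
    ∃ T : H →L[ℂ] H, IsStrictlyPositive T ∧
      (∀ σ, MeasurableSet σ → T * E σ = star (E σ) * T) ∧
      ∀ U ∈ unitary (H →L[ℂ] H), (∀ σ, MeasurableSet σ → Commute U (E σ)) → Commute T U := by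
  classical
  let G (s : Finset {σ : Set ℂ // MeasurableSet σ}) : H →L[ℂ] H := atomGram E fun j : ↥s => j.1.1
  have hG (s : Finset {σ : Set ℂ // MeasurableSet σ}) :=
    atomGram_bounds (σ := fun j : ↥s => j.1.1) hE1 hmul hE0 hunion hM fun j => j.1.2
  have hK : (0 : ℝ) < (2 * M + 1) ^ 2 := by
    have := (norm_nonneg _).trans (hM ∅ .empty); positivity
  obtain ⟨T, hT⟩ := exists_tendsto_inner_apply_of_norm_le (.of atTop) G fun s =>
    (CStarAlgebra.norm_le_iff_le_algebraMap _ hK.le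
      ((algebraMap_nonneg _ (inv_pos.2 hK).le).trans (hG s).1)).2 (hG s).2
  refine ⟨T, (isStrictlyPositive_algebraMap (inv_pos.2 hK)).of_le
    (le_of_tendsto_inner_apply hT (.of_forall fun s => (hG s).1)), fun σ hσ => ?_,
    fun U hU hUE => ?_⟩
  · refine mul_eq_mul_of_tendsto_inner_apply hT <| Ultrafilter.of_le atTop <|
      (eventually_ge_atTop {⟨σ, hσ⟩}).mono fun s hs => ?_
    exact atomGram_mul_eq hmul hE0 (fun j : ↥s => j.1.2) ⟨⟨σ, hσ⟩, singleton_subset_iff.1 hs⟩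
  · refine mul_eq_mul_of_tendsto_inner_apply hT (.of_forall fun s => Eq.symm ?_)
    exact (commute_atomGram hUE
      (fun τ hτ => (Commute.star_left_of_mem_unitary hU (hUE τ hτ)).star_right)
      fun j : ↥s => j.1.2).eq

/-- Proposition 3.2: every bounded idempotent-valued spectral measure on a complex Hilbert
space is similar, via a positive invertible operator `A`, to a self-adjoint spectral
measure; moreover `A` commutes with every unitary commuting with all the `E(σ)`. -/
theorem idempotent_spectral_measure_similar_to_selfadjoint
    {H : Type*} [NormedAddCommGroup H] [InnerProductSpace ℂ H] [CompleteSpace H]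
    (E : Set ℂ → (H →L[ℂ] H))
    (hE1 : E Set.univ = 1)
    (hE2 : ∀ σ₁ σ₂ : Set ℂ, MeasurableSet σ₁ → MeasurableSet σ₂ →
      E (σ₁ ∩ σ₂) = E σ₁ * E σ₂)
    (hE3 : ∀ σ : ℕ → Set ℂ, (∀ i, MeasurableSet (σ i)) →
      Pairwise (Function.onFun Disjoint σ) → ∀ x : H,
        Filter.Tendsto (fun n => ∑ i ∈ Finset.range n, E (σ i) x) Filter.atTop
          (nhds (E (⋃ i, σ i) x)))
    (M : ℝ) (hE4 : ∀ σ : Set ℂ, MeasurableSet σ → ‖E σ‖ ≤ M) :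
    ∃ A B : H →L[ℂ] H,
      (∀ x : H, 0 ≤ ⟪A x, x⟫) ∧
      A * B = 1 ∧ B * A = 1 ∧
      (∀ σ : Set ℂ, MeasurableSet σ → IsSelfAdjoint (A * E σ * B)) ∧
      (∀ U : H →L[ℂ] H, U * star U = 1 → star U * U = 1 →
        (∀ σ : Set ℂ, MeasurableSet σ → U * E σ = E σ * U) → U * A = A * U) := by
  have hadd (x : H) : IsCountablyAdditive fun σ => E σ x := fun σ hσ hd => hE3 σ hσ hd x
  obtain ⟨T, hT, hTE, hTU⟩ := exists_isStrictlyPositive_intertwining hE1 hE2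
    (ContinuousLinearMap.ext fun x => (hadd x).empty)
    (fun σ τ hσ hτ hd => ContinuousLinearMap.ext fun x => (hadd x).union hσ hτ hd) hE4
  have hA := hT.sqrt
  refine ⟨CFC.sqrt T, ↑hA.isUnit.unit⁻¹,
    fun x => ((ContinuousLinearMap.nonneg_iff_isPositive _).1 hA.nonneg).inner_nonneg_left x,
    hA.isUnit.mul_val_inv, hA.isUnit.val_inv_mul, fun σ hσ => ?_, fun U hU₁ hU₂ hUE => ?_⟩
  · exact hA.isUnit.unit.isSelfAdjoint_mul_mul_inv hA.isSelfAdjoint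
      (by rw [IsUnit.unit_spec, CFC.sqrt_mul_sqrt_self T, hTE σ hσ])
  · have hUT := hTU U (Unitary.mem_iff.2 ⟨hU₂, hU₁⟩) hUE
    exact (CFC.sqrt_eq_cfc (a := T) ▸ hUT.cfc_nnreal NNReal.sqrt).eq.symm
end

section
/- Let H be a complex Hilbert space, let A be an invertible bounded linear operator on H (with bounded inverse A⁻¹), and let V, W be subspaces of H such that ⟨Av, Aw⟩ = 0 for all v ∈ V and w ∈ W. Then for all unit vectors v ∈ V and w ∈ W, |⟨v,w⟩| ≤ 1 − 1/(‖A‖²‖A⁻¹‖²). In particular the angle between V and W is uniformly bounded below by a constant depending only on ‖A‖‖A⁻¹‖. -/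
local notation "⟪" x ", " y "⟫" => @inner ℂ _ _ x y

/-!
Rotate `w` by a unimodular scalar so that `⟨v, w⟩` becomes the real number `|⟨v, w⟩|`. Then
`‖v - w‖² = 2 - 2|⟨v, w⟩|`, while, `Av` and `Aw` being orthogonal,
`‖A(v - w)‖² = ‖Av‖² + ‖Aw‖² ≥ 2 / ‖A⁻¹‖²`. Comparing with `‖A(v - w)‖ ≤ ‖A‖ ‖v - w‖` gives
`1 - |⟨v, w⟩| ≥ 1 / (‖A‖² ‖A⁻¹‖²)`.
-/

theorem ContinuousLinearMap.norm_le_opNorm_mul_norm_of_comp_eq_id {𝕜 E F : Type*}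
    [NontriviallyNormedField 𝕜] [SeminormedAddCommGroup E] [SeminormedAddCommGroup F]
    [NormedSpace 𝕜 E] [NormedSpace 𝕜 F] (A : E →L[𝕜] F) (B : F →L[𝕜] E)
    (hBA : B.comp A = ContinuousLinearMap.id 𝕜 E) (x : E) : ‖x‖ ≤ ‖B‖ * ‖A x‖ :=
  calc ‖x‖ = ‖B (A x)‖ := by rw [← ContinuousLinearMap.comp_apply, hBA, id_apply]
    _ ≤ ‖B‖ * ‖A x‖ := B.le_opNorm _

section

open RCLike

variable {𝕜 E F : Type*} [RCLike 𝕜] [NormedAddCommGroup E] [InnerProductSpace 𝕜 E]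
  [NormedAddCommGroup F] [InnerProductSpace 𝕜 F]

theorem re_inner_le_one_sub_of_inner_map_eq_zero (A : E →L[𝕜] F) {C : ℝ}
    (hC : ∀ x, ‖x‖ ≤ C * ‖A x‖) {v w : E} (hv : ‖v‖ = 1) (hw : ‖w‖ = 1)
    (horth : inner 𝕜 (A v) (A w) = 0) :
    re (inner 𝕜 v w) ≤ 1 - 1 / (‖A‖ ^ 2 * C ^ 2) := by
  have one_le_sq_mul {x : E} (hx : ‖x‖ = 1) : 1 ≤ C ^ 2 * ‖A x‖ ^ 2 := by
    have := hx ▸ hC x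
    nlinarith
  have hpyth : ‖A (v - w)‖ ^ 2 = ‖A v‖ ^ 2 + ‖A w‖ ^ 2 := by
    rw [map_sub, @norm_sub_sq 𝕜, horth, map_zero]
    ring
  have hdiff : ‖v - w‖ ^ 2 = 2 * (1 - re (inner 𝕜 v w)) := by
    rw [@norm_sub_sq 𝕜, hv, hw]
    ring
  have hupper : ‖A (v - w)‖ ^ 2 ≤ ‖A‖ ^ 2 * ‖v - w‖ ^ 2 := by
    rw [← mul_pow]
    exact pow_le_pow_left₀ (norm_nonneg _) (A.le_opNorm _) 2
  have key : 1 ≤ (1 - re (inner 𝕜 v w)) * (‖A‖ ^ 2 * C ^ 2) := by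
    have : 2 ≤ C ^ 2 * (‖A‖ ^ 2 * ‖v - w‖ ^ 2) :=
      calc (2 : ℝ) ≤ C ^ 2 * (‖A v‖ ^ 2 + ‖A w‖ ^ 2) := by
            linarith [one_le_sq_mul hv, one_le_sq_mul hw]
        _ = C ^ 2 * ‖A (v - w)‖ ^ 2 := by rw [hpyth]
        _ ≤ C ^ 2 * (‖A‖ ^ 2 * ‖v - w‖ ^ 2) := mul_le_mul_of_nonneg_left hupper (sq_nonneg C)
    rw [hdiff] at this
    linarith
  have hre : re (inner 𝕜 v w) ≤ 1 := by simpa [hv, hw] using re_inner_le_norm v w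
  have hpos : 0 < ‖A‖ ^ 2 * C ^ 2 :=
    pos_of_mul_pos_right (one_pos.trans_le key) (sub_nonneg.2 hre)
  rw [le_sub_comm, div_le_iff₀ hpos]
  exact key

end

theorem angle_bound_of_similarity_to_orthogonal_general
    {H : Type*} [NormedAddCommGroup H] [InnerProductSpace ℂ H]
    (A B : H →L[ℂ] H)
    (hBA : B.comp A = ContinuousLinearMap.id ℂ H)
    (V W : Submodule ℂ H)
    (horth : ∀ v ∈ V, ∀ w ∈ W, ⟪A v, A w⟫ = 0) :
    ∀ v ∈ V, ∀ w ∈ W, ‖v‖ = 1 → ‖w‖ = 1 →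
      ‖⟪v, w⟫‖ ≤ 1 - 1 / (‖A‖ ^ 2 * ‖B‖ ^ 2) := by
  intro v hv w hw hv1 hw1
  obtain ⟨c, hc1, hc⟩ := RCLike.exists_norm_eq_mul_self ⟪v, w⟫
  have hrot : ‖⟪v, w⟫‖ = RCLike.re ⟪v, c • w⟫ := by
    rw [inner_smul_right, ← hc, RCLike.ofReal_re]
  rw [hrot]
  exact re_inner_le_one_sub_of_inner_map_eq_zero A
    (A.norm_le_opNorm_mul_norm_of_comp_eq_id B hBA) hv1
    (by rw [norm_smul, hc1, hw1, one_mul]) (horth v hv _ (W.smul_mem c hw))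

/-- Geometric core of Theorem 4.6 (c) ⇒ (a): if an invertible operator `A` (with bounded
inverse `B`) maps the subspaces `V` and `W` to orthogonal subspaces, then for all unit
vectors `v ∈ V`, `w ∈ W`, `|⟨v,w⟩| ≤ 1 − 1/(‖A‖²‖A⁻¹‖²)`; in particular the angle between
`V` and `W` is uniformly bounded below in terms of `‖A‖‖A⁻¹‖`. -/
theorem angle_bound_of_similarity_to_orthogonal
    {H : Type*} [NormedAddCommGroup H] [InnerProductSpace ℂ H] [CompleteSpace H]
    (A B : H →L[ℂ] H)
    (hAB : A.comp B = ContinuousLinearMap.id ℂ H)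
    (hBA : B.comp A = ContinuousLinearMap.id ℂ H)
    (V W : Submodule ℂ H)
    (horth : ∀ v ∈ V, ∀ w ∈ W, ⟪A v, A w⟫ = 0) :
    ∀ v ∈ V, ∀ w ∈ W, ‖v‖ = 1 → ‖w‖ = 1 →
      ‖⟪v, w⟫‖ ≤ 1 - 1 / (‖A‖ ^ 2 * ‖B‖ ^ 2) :=
  angle_bound_of_similarity_to_orthogonal_general A B hBA V W horth
end

section
/- For k ≥ 2 let T_k be the k×k complex matrix with diagonal (−1, −1, …, −1, 0), with every entry on the superdiagonal equal to 1, and all other entries 0. Let v_k = (1,1,…,1)ᵗ ∈ ℂᵏ and w_k = (1,1,…,1,0)ᵗ ∈ ℂᵏ. Then T_k v_k = 0, (T_k + I_k)ᵏ w_k = 0, and ⟨v_k, w_k⟩/(‖v_k‖‖w_k‖) = √(1 − 1/k), which tends to 1 as k → ∞ (so the angle between v_k and w_k tends to 0). -/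
open Matrix Filter Topology

namespace Fin

variable {R : Type*}

theorem sum_ite_val_eq [AddCommMonoid R] {n : ℕ} (m : ℕ) (f : Fin n → R) :
    ∑ j : Fin n, (if (j : ℕ) = m then f j else 0) = if h : m < n then f ⟨m, h⟩ else 0 := by
  split_ifs with h
  · have hval : ∀ j : Fin n, (j : ℕ) = m ↔ j = ⟨m, h⟩ := fun j => by rw [Fin.ext_iff]
    simp only [hval, Finset.sum_ite_eq', Finset.mem_univ, if_true]
  · refine Finset.sum_eq_zero fun j _ => if_neg ?_
    have := j.isLt
    omega

theorem sum_ite_val_eq_last [AddCommMonoidWithOne R] (n : ℕ) :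
    ∑ i : Fin n, (if (i : ℕ) = n - 1 then (0 : R) else 1) = (n - 1 : ℕ) := by
  cases n with
  | zero => simp
  | succ n =>
    rw [Fin.sum_univ_castSucc]
    simp [fun i : Fin n => i.isLt.ne]

end Fin

namespace Matrix

section Bidiagonal

variable {R : Type*} {n : ℕ}

theorem mulVec_apply_of_bidiagonal [NonAssocSemiring R] (M : Matrix (Fin n) (Fin n) R)
    (d : Fin n → R)
    (hM : ∀ i j, M i j = if i = j then d i else if (j : ℕ) = i + 1 then 1 else 0)
    (u : Fin n → R) (i : Fin n) :
    (M *ᵥ u) i = d i * u i + if h : (i : ℕ) + 1 < n then u ⟨i + 1, h⟩ else 0 := by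
  have hsplit : ∀ j, M i j * u j =
      (if i = j then d i * u j else 0) + if (j : ℕ) = i + 1 then u j else 0 := by
    intro j
    rw [hM]
    by_cases hij : i = j
    · subst hij; simp
    · simp [hij]
  simp only [mulVec, dotProduct, hsplit, Finset.sum_add_distrib, Finset.sum_ite_eq,
    Finset.mem_univ, if_true, Fin.sum_ite_val_eq]

theorem mulVec_const_one_eq_zero_of_bidiagonal [NonAssocRing R] (T : Matrix (Fin n) (Fin n) R)
    (hT : ∀ i j, T i j =
      if i = j then (if (i : ℕ) = n - 1 then 0 else -1) else if (j : ℕ) = i + 1 then 1 else 0) :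
    T *ᵥ (fun _ => 1) = 0 := by
  funext i
  rw [T.mulVec_apply_of_bidiagonal _ hT]
  have := i.isLt
  by_cases hi : (i : ℕ) = n - 1
  · simp [hi]
    omega
  · simp [hi, show (i : ℕ) + 1 < n by omega]

theorem add_one_apply_of_bidiagonal [NonAssocRing R] (T : Matrix (Fin n) (Fin n) R)
    (hT : ∀ i j, T i j =
      if i = j then (if (i : ℕ) = n - 1 then 0 else -1) else if (j : ℕ) = i + 1 then 1 else 0)
    (i j : Fin n) :
    (T + 1) i j =
      if i = j then (if (i : ℕ) = n - 1 then 1 else 0) else if (j : ℕ) = i + 1 then 1 else 0 := by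
  rw [add_apply, hT, one_apply]
  split_ifs <;> simp

/-- `N` shifts `u` up by one entry, except that it keeps the last one. -/
theorem mulVec_indicator_add_lt_of_bidiagonal [NonAssocSemiring R]
    (N : Matrix (Fin n) (Fin n) R)
    (hN : ∀ i j, N i j =
      if i = j then (if (i : ℕ) = n - 1 then 1 else 0) else if (j : ℕ) = i + 1 then 1 else 0)
    (m : ℕ) :
    N *ᵥ (fun i : Fin n => if (i : ℕ) + m < n - 1 then (1 : R) else 0) =
      fun i : Fin n => if (i : ℕ) + (m + 1) < n - 1 then 1 else 0 := by
  funext i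
  rw [N.mulVec_apply_of_bidiagonal _ hN]
  have := i.isLt
  by_cases hi : (i : ℕ) = n - 1
  · simp [hi]
    omega
  · have h : (i : ℕ) + 1 < n := by omega
    simp [hi, h, add_right_comm _ 1 m, add_assoc]

theorem pow_mulVec_indicator_lt_of_bidiagonal [Semiring R] (N : Matrix (Fin n) (Fin n) R)
    (hN : ∀ i j, N i j =
      if i = j then (if (i : ℕ) = n - 1 then 1 else 0) else if (j : ℕ) = i + 1 then 1 else 0)
    (m : ℕ) :
    (N ^ m) *ᵥ (fun i : Fin n => if (i : ℕ) < n - 1 then (1 : R) else 0) =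
      fun i : Fin n => if (i : ℕ) + m < n - 1 then 1 else 0 := by
  induction m with
  | zero => simp
  | succ m ih => rw [pow_succ', ← mulVec_mulVec, ih, N.mulVec_indicator_add_lt_of_bidiagonal hN]

end Bidiagonal

end Matrix

theorem Real.sub_one_div_sqrt_mul_sqrt_sub_one {x : ℝ} (hx : 1 ≤ x) :
    (x - 1) / (√x * √(x - 1)) = √(1 - 1 / x) := by
  rcases hx.eq_or_lt with rfl | hx
  · simp
  have hx1 : 0 < x - 1 := by linarith
  rw [one_sub_div (by positivity), Real.sqrt_div hx1.le]
  nth_rw 1 [← Real.mul_self_sqrt hx1.le]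
  field_simp

theorem tendsto_sqrt_one_sub_one_div_natCast :
    Tendsto (fun m : ℕ => √(1 - 1 / (m : ℝ))) atTop (𝓝 1) := by
  simpa using ((tendsto_one_div_atTop_nhds_zero_nat (𝕜 := ℝ)).const_sub 1).sqrt

/-- Eigenvector and angle computations from Example 4.3: for the `k×k` matrix `T_k` with
diagonal `(−1,…,−1,0)`, superdiagonal entries `1` and all other entries `0`, the vector
`v_k = (1,…,1)ᵗ` is in `ker T_k`, the vector `w_k = (1,…,1,0)ᵗ` is in `ker (T_k + I)ᵏ`,
and the normalized inner product of `v_k` and `w_k` equals `√(1 − 1/k)`, which tends to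
`1` as `k → ∞`. -/
theorem example_angles_tend_to_zero
    (k : ℕ) (hk : 2 ≤ k)
    (T : Matrix (Fin k) (Fin k) ℂ)
    (hT : ∀ i j : Fin k, T i j =
      if i = j then (if (i : ℕ) = k - 1 then 0 else -1)
      else if (j : ℕ) = (i : ℕ) + 1 then 1 else 0)
    (v w : Fin k → ℂ)
    (hv : ∀ i, v i = 1)
    (hw : ∀ i, w i = if (i : ℕ) = k - 1 then 0 else 1) :
    T.mulVec v = 0 ∧
    ((T + 1) ^ k).mulVec w = 0 ∧
    ‖∑ i, (starRingEnd ℂ) (v i) * w i‖ /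
        (Real.sqrt (∑ i, ‖v i‖ ^ 2) * Real.sqrt (∑ i, ‖w i‖ ^ 2)) =
      Real.sqrt (1 - 1 / (k : ℝ)) ∧
    Filter.Tendsto (fun m : ℕ => Real.sqrt (1 - 1 / (m : ℝ))) Filter.atTop (nhds 1) := by
  have hvw : ∑ i, (starRingEnd ℂ) (v i) * w i = (k - 1 : ℕ) := by
    simp only [hv, hw, map_one, one_mul, Fin.sum_ite_val_eq_last]
  have hv2 : ∑ i, ‖v i‖ ^ 2 = k := by simp [hv]
  have hw2 : ∑ i, ‖w i‖ ^ 2 = (k - 1 : ℕ) := by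
    rw [← Fin.sum_ite_val_eq_last]
    refine Finset.sum_congr rfl fun i _ => ?_
    rw [hw]
    split_ifs <;> simp
  refine ⟨?_, ?_, ?_, tendsto_sqrt_one_sub_one_div_natCast⟩
  · rw [show v = fun _ => 1 from funext hv]
    exact T.mulVec_const_one_eq_zero_of_bidiagonal hT
  · have hw' : w = fun i : Fin k => if (i : ℕ) < k - 1 then 1 else 0 := by
      funext i
      have := i.isLt
      rw [hw]
      split_ifs <;> first | rfl | omega
    rw [hw', (T + 1).pow_mulVec_indicator_lt_of_bidiagonal (T.add_one_apply_of_bidiagonal hT)]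
    funext i
    simp only [Pi.zero_apply, ite_eq_right_iff]
    omega
  · rw [hvw, hv2, hw2, Complex.norm_natCast, Nat.cast_sub (by omega), Nat.cast_one]
    exact Real.sub_one_div_sqrt_mul_sqrt_sub_one (mod_cast (by omega : 1 ≤ k))
end

section
/- For k ≥ 1 let T_k be the k×k complex matrix with diagonal (−1, −1, …, −1, 0), all superdiagonal entries equal to 1, and all other entries 0. If z ∈ ℂ satisfies |1 + z| > 1, then T_k − zI_k is invertible for every k and there is a constant C (depending on z but not on k) such that the operator norm ‖(T_k − zI_k)⁻¹‖ ≤ C for all k, where the operator norm is taken with respect to the ℓ² norm on ℂᵏ. -/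
/-!
Write `T_k - z = S + E - (1 + z)`, where `S` is the upper shift (`‖S‖ ≤ 1`) and `E` is the
projection onto the last coordinate, so that `E S = 0`. For `‖α‖ > ‖S‖` the resolvent
`R = (α - S)⁻¹` is a Neumann series of norm at most `(‖α‖ - ‖S‖)⁻¹`. From `E S = 0` we get
`E R = α⁻¹ E`, hence `α - S - E = (1 - α⁻¹ E)(α - S)`, and since `E` is idempotent,
`1 - α⁻¹ E` has inverse `1 + (α - 1)⁻¹ E`. With `α = 1 + z` this bounds
`‖(T_k - z)⁻¹‖` by `(‖1 + z‖ - 1)⁻¹ (1 + ‖z‖⁻¹)`, independently of `k`.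
-/

def exampleMatrix (k : ℕ) : Matrix (Fin k) (Fin k) ℂ :=
  Matrix.of fun i j =>
    if i = j then (if (i : ℕ) = k - 1 then 0 else -1)
    else if (j : ℕ) = (i : ℕ) + 1 then 1 else 0

open scoped Matrix.Norms.L2Operator

section Resolvent

variable {𝕜 A : Type*}

theorem IsIdempotentElem.one_sub_inv_smul_mul_one_add_inv_smul [Field 𝕜] [Ring A]
    [Algebra 𝕜 A] {e : A} (he : IsIdempotentElem e) {k : 𝕜} (hk0 : k ≠ 0) (hk1 : k ≠ 1) :
    (1 - k⁻¹ • e) * (1 + (k - 1)⁻¹ • e) = 1 ∧ (1 + (k - 1)⁻¹ • e) * (1 - k⁻¹ • e) = 1 := by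
  have hcoef : (k - 1)⁻¹ - k⁻¹ - k⁻¹ * (k - 1)⁻¹ = 0 := by
    field_simp [hk0, sub_ne_zero.mpr hk1]
    ring
  constructor
  · calc (1 - k⁻¹ • e) * (1 + (k - 1)⁻¹ • e)
        = 1 + ((k - 1)⁻¹ - k⁻¹ - k⁻¹ * (k - 1)⁻¹) • e := by
          simp only [sub_mul, mul_add, one_mul, mul_one, smul_mul_smul, he.eq]
          module
      _ = 1 := by rw [hcoef, zero_smul, add_zero]
  · calc (1 + (k - 1)⁻¹ • e) * (1 - k⁻¹ • e)
        = 1 + ((k - 1)⁻¹ - k⁻¹ - k⁻¹ * (k - 1)⁻¹) • e := by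
          simp only [add_mul, mul_sub, one_mul, mul_one, smul_mul_smul, he.eq]
          module
      _ = 1 := by rw [hcoef, zero_smul, add_zero]

theorem resolvent_add_of_isIdempotentElem [Field 𝕜] [Ring A] [Algebra 𝕜 A] {s e : A} {k : 𝕜}
    (hk : k ∈ resolventSet 𝕜 s) (hk0 : k ≠ 0) (hk1 : k ≠ 1)
    (he : IsIdempotentElem e) (hes : e * s = 0) :
    k ∈ resolventSet 𝕜 (s + e) ∧ resolvent (s + e) k = resolvent s k * (1 + (k - 1)⁻¹ • e) := by
  set B := algebraMap 𝕜 A k - s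
  set R := resolvent s k
  have hB : IsUnit B := spectrum.mem_resolventSet_iff.mp hk
  have hBR : B * R = 1 := Ring.mul_inverse_cancel B hB
  have hRB : R * B = 1 := Ring.inverse_mul_cancel B hB
  have heB : e * B = k • e := by
    rw [mul_sub, hes, sub_zero, Algebra.algebraMap_eq_smul_one, mul_smul_comm, mul_one]
  have hfactor : algebraMap 𝕜 A k - (s + e) = (1 - k⁻¹ • e) * B := by
    rw [sub_mul, one_mul, smul_mul_assoc, heB, inv_smul_smul₀ hk0, sub_add_eq_sub_sub]
  obtain ⟨hUV, hVU⟩ := he.one_sub_inv_smul_mul_one_add_inv_smul hk0 hk1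
  let u : Aˣ :=
    { val := (1 - k⁻¹ • e) * B
      inv := R * (1 + (k - 1)⁻¹ • e)
      val_inv := by rw [mul_assoc, ← mul_assoc B, hBR, one_mul, hUV]
      inv_val := by rw [mul_assoc, ← mul_assoc _ (1 - k⁻¹ • e), hVU, one_mul, hRB] }
  refine ⟨spectrum.mem_resolventSet_iff.mpr (hfactor ▸ u.isUnit), ?_⟩
  rw [resolvent, hfactor]
  exact Ring.inverse_unit u

variable [NontriviallyNormedField 𝕜] [NormedRing A] [NormedAlgebra 𝕜 A]
  [CompleteSpace A] [NormOneClass A]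

theorem norm_resolvent_le_of_norm_lt {a : A} {k : 𝕜} (h : ‖a‖ < ‖k‖) :
    ‖resolvent a k‖ ≤ (‖k‖ - ‖a‖)⁻¹ := by
  have hk : k ≠ 0 := norm_pos_iff.mp ((norm_nonneg a).trans_lt h)
  have hsmall : ‖k⁻¹ • a‖ < 1 := by
    rw [norm_smul, norm_inv, inv_mul_lt_iff₀ (norm_pos_iff.mpr hk), mul_one]
    exact h
  have hneumann : resolvent a k = k⁻¹ • ∑' n, (k⁻¹ • a) ^ n := by
    have := spectrum.units_smul_resolvent_self (r := Units.mk0 k hk) (a := a)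
    simp only [resolvent, map_one, Units.smul_def, Units.val_inv_eq_inv_val, Units.val_mk0,
      ← geom_series_eq_inverse _ hsmall] at this
    rw [← this, inv_smul_smul₀ hk, resolvent]
  calc ‖resolvent a k‖ ≤ ‖k‖⁻¹ * (1 - ‖k⁻¹ • a‖)⁻¹ := by
        rw [hneumann, norm_smul, norm_inv]
        gcongr
        simpa using tsum_geometric_le_of_norm_lt_one _ hsmall
    _ = (‖k‖ - ‖a‖)⁻¹ := by
        rw [norm_smul, norm_inv]
        field_simp

theorem norm_resolvent_add_of_isIdempotentElem_le {s e : A} {k : 𝕜} (h : ‖s‖ < ‖k‖)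
    (hk1 : k ≠ 1) (he : IsIdempotentElem e) (hes : e * s = 0) :
    k ∈ resolventSet 𝕜 (s + e) ∧
      ‖resolvent (s + e) k‖ ≤ (‖k‖ - ‖s‖)⁻¹ * (1 + ‖k - 1‖⁻¹ * ‖e‖) := by
  have hk0 : k ≠ 0 := norm_pos_iff.mp ((norm_nonneg s).trans_lt h)
  obtain ⟨hmem, hres⟩ := resolvent_add_of_isIdempotentElem
    (spectrum.mem_resolventSet_of_norm_lt h) hk0 hk1 he hes
  refine ⟨hmem, ?_⟩
  rw [hres]
  calc ‖resolvent s k * (1 + (k - 1)⁻¹ • e)‖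
      ≤ ‖resolvent s k‖ * (‖(1 : A)‖ + ‖(k - 1)⁻¹ • e‖) :=
        (norm_mul_le _ _).trans (by gcongr; exact norm_add_le _ _)
    _ ≤ (‖k‖ - ‖s‖)⁻¹ * (1 + ‖k - 1‖⁻¹ * ‖e‖) := by
        rw [norm_one, norm_smul, norm_inv]
        gcongr
        exact norm_resolvent_le_of_norm_lt h

end Resolvent

namespace Matrix

variable {α : Type*} (n : ℕ)

def upperShift [Zero α] [One α] : Matrix (Fin n) (Fin n) α :=
  of fun i j => if (j : ℕ) = i + 1 then 1 else 0

variable {n}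

theorem conjTranspose_upperShift_mul_upperShift [Semiring α] [StarRing α] :
    (upperShift n)ᴴ * upperShift n =
      diagonal fun i : Fin n => if (i : ℕ) = 0 then (0 : α) else 1 := by
  ext i j
  rw [mul_apply, diagonal_apply]
  by_cases hj : (j : ℕ) = 0
  · simp +contextual [upperShift, Fin.ext_iff, hj]
  · rw [Finset.sum_eq_single ⟨j - 1, by omega⟩]
    · simp only [upperShift, conjTranspose_apply, of_apply, Fin.ext_iff,
        Nat.sub_add_cancel (Nat.one_le_iff_ne_zero.mpr hj)]
      split_ifs <;> simp_all
    · intro l _ hl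
      simp [upperShift, Fin.ext_iff] at hl ⊢
      omega
    · simp

theorem single_last_mul_upperShift [Semiring α] :
    single (Fin.last n) (Fin.last n) (1 : α) * upperShift (n + 1) = 0 := by
  ext a b
  by_cases ha : a = Fin.last n
  · simp [ha, single_mul_apply_same, upperShift]
    omega
  · simp [single_mul_apply_of_ne (h := ha)]

theorem isStarProjection_single_one {ι : Type*} [Fintype ι] [DecidableEq ι]
    [Semiring α] [StarRing α] (i : ι) : IsStarProjection (single i i (1 : α)) :=
  ⟨by simp [IsIdempotentElem], by simp [IsSelfAdjoint, star_eq_conjTranspose]⟩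

theorem norm_upperShift_le_one {𝕜 : Type*} [RCLike 𝕜] :
    ‖(upperShift n : Matrix (Fin n) (Fin n) 𝕜)‖ ≤ 1 := by
  have hdiag : ‖(upperShift n : Matrix (Fin n) (Fin n) 𝕜)ᴴ * upperShift n‖ ≤ 1 := by
    rw [conjTranspose_upperShift_mul_upperShift, l2_opNorm_diagonal]
    refine (pi_norm_le_iff_of_nonneg zero_le_one).mpr fun i => ?_
    split_ifs <;> simp
  rw [l2_opNorm_conjTranspose_mul_self] at hdiag
  nlinarith [norm_nonneg (upperShift n : Matrix (Fin n) (Fin n) 𝕜)]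

end Matrix

open Matrix

theorem exampleMatrix_succ (n : ℕ) :
    exampleMatrix (n + 1) = upperShift (n + 1) + single (Fin.last n) (Fin.last n) 1 - 1 := by
  ext i j
  simp only [exampleMatrix, upperShift, single, Matrix.sub_apply, Matrix.add_apply, Matrix.one_apply, of_apply,
    Fin.ext_iff, Fin.val_last, Nat.add_sub_cancel]
  split_ifs <;> first | (exfalso; omega) | norm_num

/-- Bounded direction of the spectrum computation in Example 4.3: if `|1 + z| > 1`, then
`T_k − zI` is invertible for every `k ≥ 1` and the ℓ²-operator norms of the inverses are
uniformly bounded in `k`. -/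
theorem example_resolvent_uniformly_bounded
    (z : ℂ) (hz : 1 < ‖1 + z‖) :
    (∀ k : ℕ, 1 ≤ k → IsUnit (exampleMatrix k - z • (1 : Matrix (Fin k) (Fin k) ℂ))) ∧
    ∃ C : ℝ, ∀ k : ℕ, 1 ≤ k →
      ‖Matrix.toEuclideanCLM (𝕜 := ℂ)
        ((exampleMatrix k - z • (1 : Matrix (Fin k) (Fin k) ℂ))⁻¹)‖ ≤ C := by
  have hz0 : z ≠ 0 := by rintro rfl; simp at hz
  have hz1 : 1 + z ≠ 1 := by simpa using hz0
  have key (n : ℕ) := norm_resolvent_add_of_isIdempotentElem_le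
    ((norm_upperShift_le_one (n := n + 1)).trans_lt hz) hz1
    (isStarProjection_single_one (Fin.last n)).isIdempotentElem
    (single_last_mul_upperShift (α := ℂ))
  have hsplit (n : ℕ) : exampleMatrix (n + 1) - z • 1 = -(algebraMap ℂ _ (1 + z) -
      (upperShift (n + 1) + single (Fin.last n) (Fin.last n) 1)) := by
    rw [exampleMatrix_succ, Algebra.algebraMap_eq_smul_one]
    module
  refine ⟨fun k hk => ?_, (‖1 + z‖ - 1)⁻¹ * (1 + ‖z‖⁻¹), fun k hk => ?_⟩
  · obtain ⟨n, rfl⟩ := Nat.exists_eq_add_of_le' hk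
    rw [hsplit]
    exact (spectrum.mem_resolventSet_iff.mp (key n).1).neg
  · obtain ⟨n, rfl⟩ := Nat.exists_eq_add_of_le' hk
    rw [← cstar_norm_def, hsplit, inv_eq_right_inv (B := -resolvent _ (1 + z)), norm_neg]
    · refine (key n).2.trans ?_
      have hS := norm_upperShift_le_one (𝕜 := ℂ) (n := n + 1)
      have hE := (isStarProjection_single_one (α := ℂ) (Fin.last n)).norm_le
      rw [add_sub_cancel_left]
      gcongr
      exact mul_le_of_le_one_right (by positivity) hE
    · rw [neg_mul_neg, resolvent]
      exact Ring.mul_inverse_cancel _ (spectrum.mem_resolventSet_iff.mp (key n).1)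
end

section
/- For k ≥ 1 let T_k be the k×k complex matrix with diagonal (−1, −1, …, −1, 0), all superdiagonal entries equal to 1, and all other entries 0. If z ∈ ℂ satisfies z ≠ −1, z ≠ 0, and |1 + z| ≤ 1, then T_k − zI_k is invertible for every k, but the set {‖(T_k − zI_k)⁻¹‖ : k ≥ 1} of operator norms is not bounded above. -/
open Matrix

section

variable {𝕜 n : Type*} [RCLike 𝕜] [Fintype n]

lemma norm_toLp_le_opNorm_toEuclideanCLM_inv_mul [DecidableEq n] {A : Matrix n n 𝕜}
    (hA : IsUnit A) (v : n → 𝕜) :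
    ‖WithLp.toLp 2 v‖ ≤ ‖toEuclideanCLM (𝕜 := 𝕜) A⁻¹‖ * ‖WithLp.toLp 2 (A *ᵥ v)‖ := by
  have hinv : A⁻¹ *ᵥ (A *ᵥ v) = v := by
    rw [mulVec_mulVec, nonsing_inv_mul A ((isUnit_iff_isUnit_det A).mp hA), one_mulVec]
  calc ‖WithLp.toLp 2 v‖ = ‖toEuclideanCLM (𝕜 := 𝕜) A⁻¹ (WithLp.toLp 2 (A *ᵥ v))‖ := by
        rw [toEuclideanCLM_toLp, hinv]
    _ ≤ _ := ContinuousLinearMap.le_opNorm _ _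

lemma card_mul_sq_le_norm_toLp_sq {v : n → 𝕜} {c : ℝ} (hc : 0 ≤ c) (hv : ∀ i, c ≤ ‖v i‖) :
    Fintype.card n * c ^ 2 ≤ ‖WithLp.toLp 2 v‖ ^ 2 := by
  rw [EuclideanSpace.norm_sq_eq]
  simpa using Finset.sum_le_sum fun i (_ : i ∈ Finset.univ) => pow_le_pow_left₀ hc (hv i) 2

end

lemma exampleMatrix_isUpperTriangular (k : ℕ) : (exampleMatrix k).IsUpperTriangular := by
  intro i j hji
  have hij : i ≠ j := (ne_of_lt hji).symm
  have hsucc : (j : ℕ) ≠ i + 1 := by have : (j : ℕ) < i := hji; omega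
  simp [exampleMatrix, hij, hsucc]

lemma isUnit_exampleMatrix_sub_smul_one {k : ℕ} {z : ℂ} (hz1 : z ≠ -1) (hz0 : z ≠ 0) :
    IsUnit (exampleMatrix k - z • (1 : Matrix (Fin k) (Fin k) ℂ)) := by
  have htri : (exampleMatrix k - z • (1 : Matrix (Fin k) (Fin k) ℂ)).IsUpperTriangular := by
    rw [smul_one_eq_diagonal]
    exact (exampleMatrix_isUpperTriangular k).sub (blockTriangular_diagonal _)
  rw [isUnit_iff_isUnit_det, det_of_isUpperTriangular htri, isUnit_iff_ne_zero,
    Finset.prod_ne_zero_iff]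
  intro i _
  have h1 : -1 - z ≠ 0 := fun h => hz1 (by linear_combination -h)
  by_cases hi : (i : ℕ) = k - 1 <;> simp [exampleMatrix, hi, hz0, h1]

lemma exampleMatrix_mulVec_apply {k : ℕ} (w : ℕ → ℂ) (i : Fin k) :
    (exampleMatrix k *ᵥ fun j => w j) i = if (i : ℕ) + 1 = k then 0 else w (i + 1) - w i := by
  set d : ℂ := if (i : ℕ) = k - 1 then 0 else -1
  have hsplit : ∀ j : Fin k, exampleMatrix k i j * w j =
      (if i = j then d * w i else 0) + (if (i : ℕ) + 1 = j then w j else 0) := by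
    intro j
    by_cases h : i = j
    · subst h; simp [exampleMatrix, d]
    · simp [exampleMatrix, h, eq_comm]
  simp only [mulVec, dotProduct, hsplit, Finset.sum_add_distrib, Finset.sum_ite_eq,
    Finset.mem_univ, if_true, Finset.mem_range,
    Fin.sum_univ_eq_sum_range (fun j => if (i : ℕ) + 1 = j then w j else 0)]
  by_cases hlast : (i : ℕ) + 1 = k
  · have hd : d = 0 := if_pos (by omega)
    simp [hd, hlast]
  · simp [d, hlast, show (i : ℕ) ≠ k - 1 by omega, show (i : ℕ) + 1 < k by omega]
    ring

/-- The last column of `(exampleMatrix (k + 1) - z • 1)⁻¹`, indexed by `ℕ`. -/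
noncomputable def resolventLastColumn (z : ℂ) (k n : ℕ) : ℂ :=
  -(z * (1 + z) ^ (k - n))⁻¹

lemma exampleMatrix_sub_smul_one_mulVec_resolventLastColumn {z : ℂ} (hz1 : z ≠ -1)
    (hz0 : z ≠ 0) (k : ℕ) :
    (exampleMatrix (k + 1) - z • (1 : Matrix (Fin (k + 1)) (Fin (k + 1)) ℂ)) *ᵥ
      (fun j : Fin (k + 1) => resolventLastColumn z k j) =
      Pi.single (Fin.last k) 1 := by
  have hz1' : 1 + z ≠ 0 := fun h => hz1 (by linear_combination h)
  funext i
  rw [sub_mulVec, smul_mulVec, one_mulVec, Pi.sub_apply, Pi.smul_apply,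
    exampleMatrix_mulVec_apply, smul_eq_mul]
  by_cases hi : i = Fin.last k
  · subst hi
    simp [resolventLastColumn, hz0]
  · have hlt : (i : ℕ) < k := Fin.val_lt_last hi
    have hexp : k - i = (k - (i + 1)) + 1 := by omega
    simp only [show (i : ℕ) + 1 ≠ k + 1 by omega, if_false, Pi.single_eq_of_ne hi,
      resolventLastColumn, hexp, pow_succ]
    field_simp
    ring

lemma norm_inv_le_norm_resolventLastColumn {z : ℂ} (hz1 : z ≠ -1) (hz : ‖1 + z‖ ≤ 1)
    (k n : ℕ) : ‖z‖⁻¹ ≤ ‖resolventLastColumn z k n‖ := by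
  have hz1' : 0 < ‖1 + z‖ := norm_pos_iff.2 fun h => hz1 (by linear_combination h)
  rw [resolventLastColumn, norm_neg, norm_inv, norm_mul, norm_pow, mul_inv]
  exact le_mul_of_one_le_right (by positivity)
    ((one_le_inv₀ (by positivity)).2 (pow_le_one₀ (norm_nonneg _) hz))

lemma succ_le_sq_norm_mul_opNorm_resolvent {z : ℂ} (hz1 : z ≠ -1) (hz0 : z ≠ 0)
    (hz : ‖1 + z‖ ≤ 1) (k : ℕ) :
    (k + 1 : ℝ) ≤ (‖z‖ * ‖toEuclideanCLM (𝕜 := ℂ)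
      (exampleMatrix (k + 1) - z • (1 : Matrix (Fin (k + 1)) (Fin (k + 1)) ℂ))⁻¹‖) ^ 2 := by
  have hcol := card_mul_sq_le_norm_toLp_sq (v := fun j : Fin (k + 1) => resolventLastColumn z k j)
    (inv_nonneg.2 (norm_nonneg z)) fun j => norm_inv_le_norm_resolventLastColumn hz1 hz k j
  have hinv := norm_toLp_le_opNorm_toEuclideanCLM_inv_mul
    (isUnit_exampleMatrix_sub_smul_one hz1 hz0)
    (fun j : Fin (k + 1) => resolventLastColumn z k j)
  rw [exampleMatrix_sub_smul_one_mulVec_resolventLastColumn hz1 hz0, PiLp.toLp_single,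
    PiLp.norm_single, norm_one, mul_one] at hinv
  rw [Fintype.card_fin, Nat.cast_add_one] at hcol
  have hz0' : ‖z‖ ≠ 0 := norm_ne_zero_iff.2 hz0
  calc (k + 1 : ℝ) = (k + 1) * ‖z‖⁻¹ ^ 2 * ‖z‖ ^ 2 := by field_simp
    _ ≤ ‖WithLp.toLp 2 fun j : Fin (k + 1) => resolventLastColumn z k j‖ ^ 2 * ‖z‖ ^ 2 := by
        gcongr
    _ ≤ _ := by rw [mul_pow, mul_comm]; gcongr

/-- Unbounded direction of the spectrum computation in Example 4.3: if `z ∉ {−1,0}` and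
`|1 + z| ≤ 1`, then `T_k − zI` is invertible for every `k ≥ 1`, but the ℓ²-operator norms
of the inverses are not bounded above. -/
theorem example_resolvent_unbounded
    (z : ℂ) (hz1 : z ≠ -1) (hz0 : z ≠ 0) (hz : ‖1 + z‖ ≤ 1) :
    (∀ k : ℕ, 1 ≤ k → IsUnit (exampleMatrix k - z • (1 : Matrix (Fin k) (Fin k) ℂ))) ∧
    ¬ ∃ C : ℝ, ∀ k : ℕ, 1 ≤ k →
      ‖Matrix.toEuclideanCLM (𝕜 := ℂ)
        ((exampleMatrix k - z • (1 : Matrix (Fin k) (Fin k) ℂ))⁻¹)‖ ≤ C := by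
  refine ⟨fun k _ => isUnit_exampleMatrix_sub_smul_one hz1 hz0, ?_⟩
  rintro ⟨C, hC⟩
  obtain ⟨k, hk⟩ := exists_nat_gt ((‖z‖ * C) ^ 2)
  have hlower := succ_le_sq_norm_mul_opNorm_resolvent hz1 hz0 hz k
  have hupper := pow_le_pow_left₀ (by positivity)
    (mul_le_mul_of_nonneg_left (hC (k + 1) (Nat.le_add_left 1 k)) (norm_nonneg z)) 2
  linarith
end
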